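/- The vector fields y∂_x, u_i∂_x, and u_i∂_{u_j} + u_j∂_{u_i} preserve the Levi-Civita connection of the metric g = 2dx dy + z²dy² + dz² + Σ du_i² (they are affine fields) but are not homothety fields of g. -/

import Mathlib

noncomputable section

open scoped BigOperators

/-- Partial derivative of a scalar function on `ℝⁿ` in the `i`-th coordinate direction. -/
def pd {n : ℕ} (i : Fin n) (f : (Fin n → ℝ) → ℝ) (x : Fin n → ℝ) : ℝ :=
  fderiv ℝ f x (Pi.single i 1)

/-- The `m`-th coordinate of a point of `ℝⁿ` (junk value `0` if `m ≥ n`). -/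
def co {n : ℕ} (m : ℕ) (x : Fin n → ℝ) : ℝ :=
  if h : m < n then x ⟨m, h⟩ else 0

/-- Christoffel symbols `Γ^k_{ij} = ½ g^{kl}(∂_i g_{jl} + ∂_j g_{il} − ∂_l g_{ij})`
of a metric given as a matrix-valued function. -/
def christoffel {n : ℕ} (g : (Fin n → ℝ) → Matrix (Fin n) (Fin n) ℝ)
    (k i j : Fin n) (x : Fin n → ℝ) : ℝ :=
  (1/2) * ∑ l, (g x)⁻¹ k l *
    (pd i (fun y => g y j l) x + pd j (fun y => g y i l) x - pd l (fun y => g y i j) x)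

/-- Curvature tensor `R^i_{jkl}` of a torsion-free connection with Christoffel symbols `Γ`. -/
def curvature {n : ℕ} (Γ : Fin n → Fin n → Fin n → (Fin n → ℝ) → ℝ)
    (i j k l : Fin n) (x : Fin n → ℝ) : ℝ :=
  pd k (Γ i l j) x - pd l (Γ i k j) x +
    ∑ s, (Γ i k s x * Γ s l j x - Γ i l s x * Γ s k j x)

/-- Ricci tensor `Ric_{jl} = R^i_{jil}`. -/
def ricci {n : ℕ} (Γ : Fin n → Fin n → Fin n → (Fin n → ℝ) → ℝ)
    (j l : Fin n) (x : Fin n → ℝ) : ℝ :=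
  ∑ i, curvature Γ i j i l x

/-- Lie derivative `(L_v g)_{ij} = v^k ∂_k g_{ij} + g_{kj} ∂_i v^k + g_{ik} ∂_j v^k`. -/
def lieMetric {n : ℕ} (v : Fin n → (Fin n → ℝ) → ℝ)
    (g : (Fin n → ℝ) → Matrix (Fin n) (Fin n) ℝ) (i j : Fin n) (x : Fin n → ℝ) : ℝ :=
  ∑ k, (v k x * pd k (fun y => g y i j) x
        + g x k j * pd i (v k) x + g x i k * pd j (v k) x)

/-- Lie derivative `(L_v Γ)^k_{ij}` of a torsion-free connection along a vector field `v`. -/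
def lieConn {n : ℕ} (v : Fin n → (Fin n → ℝ) → ℝ)
    (Γ : Fin n → Fin n → Fin n → (Fin n → ℝ) → ℝ)
    (k i j : Fin n) (x : Fin n → ℝ) : ℝ :=
  pd i (fun y => pd j (v k) y) x +
    ∑ s, (v s x * pd s (Γ k i j) x + Γ k s j x * pd i (v s) x
          + Γ k i s x * pd j (v s) x - Γ s i j x * pd s (v k) x)

/-- A vector field with smooth components. -/
def SmoothVF {n : ℕ} (v : Fin n → (Fin n → ℝ) → ℝ) : Prop :=
  ∀ k, ContDiff ℝ (⊤ : ℕ∞) (v k)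

/-- `v` is a projective vector field of `g`: the Lie derivative of the Levi-Civita
connection along `v` is of the form `δ^k_i φ_j + δ^k_j φ_i` for some 1-form `φ`
(the standard characterization of projective fields). -/
def IsProjectiveField {n : ℕ} (g : (Fin n → ℝ) → Matrix (Fin n) (Fin n) ℝ)
    (v : Fin n → (Fin n → ℝ) → ℝ) : Prop :=
  ∃ φ : Fin n → (Fin n → ℝ) → ℝ, ∀ k i j x,
    lieConn v (christoffel g) k i j x =
      (if k = i then φ j x else 0) + (if k = j then φ i x else 0)

/-- The set of (smooth) projective vector fields of `g`: the projective algebra `𝔭(g)`. -/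
def ProjSet {n : ℕ} (g : (Fin n → ℝ) → Matrix (Fin n) (Fin n) ℝ) :
    Set (Fin n → (Fin n → ℝ) → ℝ) :=
  {v | SmoothVF v ∧ IsProjectiveField g v}

/-- The set of (smooth) Killing fields of `g`: the isometry algebra `I(g)`. -/
def KillSet {n : ℕ} (g : (Fin n → ℝ) → Matrix (Fin n) (Fin n) ℝ) :
    Set (Fin n → (Fin n → ℝ) → ℝ) :=
  {v | SmoothVF v ∧ ∀ i j x, lieMetric v g i j x = 0}

/-- The set of (smooth) homothety fields of `g` (`L_v g = λ·g`, `λ` constant):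
the homothety algebra `H(g)`. -/
def HomSet {n : ℕ} (g : (Fin n → ℝ) → Matrix (Fin n) (Fin n) ℝ) :
    Set (Fin n → (Fin n → ℝ) → ℝ) :=
  {v | SmoothVF v ∧ ∃ c : ℝ, ∀ i j x, lieMetric v g i j x = c * g x i j}

/-- The Lorentzian pp-wave metric `g = 2dx dy + z²dy² + dz² + Σ_{i≥4} du_i²`
on ℝⁿ, in coordinates `(x,y,z,u₄,…,u_n)` indexed `0,1,2,3,…,n−1`. -/
def gpp (n : ℕ) (x : Fin n → ℝ) : Matrix (Fin n) (Fin n) ℝ := fun i j =>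
  if ((i : ℕ) = 0 ∧ (j : ℕ) = 1) ∨ ((i : ℕ) = 1 ∧ (j : ℕ) = 0) then 1
  else if (i : ℕ) = 1 ∧ (j : ℕ) = 1 then (co 2 x)^2
  else if i = j ∧ 2 ≤ (i : ℕ) then 1
  else 0


variable {n : ℕ}

lemma pd_const {n : ℕ} (i : Fin n) (c : ℝ) (x : Fin n → ℝ) : pd i (fun _ => c) x = 0 := by
  simp [pd]

lemma pd_clm {n : ℕ} (i : Fin n) (e : (Fin n → ℝ) →L[ℝ] ℝ) (x : Fin n → ℝ) :
    pd i (⇑e) x = e (Pi.single i 1) := by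
  simp [pd, e.fderiv]

lemma pd_coord {n : ℕ} (i j : Fin n) (x : Fin n → ℝ) :
    pd i (fun y => y j) x = if j = i then 1 else 0 := by
  have : (fun y : Fin n → ℝ => y j) = ⇑(ContinuousLinearMap.proj (R := ℝ) (φ := fun _ : Fin n => ℝ) j) := rfl
  rw [this, pd_clm]
  simp [Pi.single_apply]

lemma pd_coord_add {n : ℕ} (i j k : Fin n) (x : Fin n → ℝ) :
    pd i (fun y => y j + y k) x = (if j = i then 1 else 0) + (if k = i then 1 else 0) := by
  have : (fun y : Fin n → ℝ => y j + y k) = ⇑(ContinuousLinearMap.proj (R := ℝ) (φ := fun _ : Fin n => ℝ) j + ContinuousLinearMap.proj (R := ℝ) (φ := fun _ : Fin n => ℝ) k) := rfl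
  rw [this, pd_clm]
  simp [Pi.single_apply]

lemma pd_sq {n : ℕ} (i j : Fin n) (x : Fin n → ℝ) :
    pd i (fun y => (y j)^2) x = if j = i then 2 * x j else 0 := by
  have h1 : Differentiable ℝ (fun y : Fin n → ℝ => y j) :=
    (ContinuousLinearMap.proj (R := ℝ) (φ := fun _ : Fin n => ℝ) j).differentiable
  have : (fun y : Fin n → ℝ => (y j)^2) = fun y => (y j) * (y j) := by ext y; ring
  rw [this]
  unfold pd
  rw [fderiv_fun_mul (h1.differentiableAt) (h1.differentiableAt)]
  have hc : fderiv ℝ (fun y : Fin n → ℝ => y j) x = ContinuousLinearMap.proj (R := ℝ) (φ := fun _ : Fin n => ℝ) j :=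
    (ContinuousLinearMap.proj (R := ℝ) (φ := fun _ : Fin n => ℝ) j).fderiv
  rw [hc]
  simp [Pi.single_apply]
  split <;> ring

def ginv (n : ℕ) (x : Fin n → ℝ) : Matrix (Fin n) (Fin n) ℝ := fun i j =>
  if ((i : ℕ) = 0 ∧ (j : ℕ) = 1) ∨ ((i : ℕ) = 1 ∧ (j : ℕ) = 0) then 1
  else if (i : ℕ) = 0 ∧ (j : ℕ) = 0 then -(co 2 x)^2
  else if i = j ∧ 2 ≤ (i : ℕ) then 1
  else 0

lemma gpp_mul_ginv (hn : 3 ≤ n) (x : Fin n → ℝ) : gpp n x * ginv n x = 1 := by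
  have h0 : (0:ℕ) < n := by omega
  have h1 : (1:ℕ) < n := by omega
  have h2 : (2:ℕ) < n := by omega
  set v0 : Fin n := ⟨0, h0⟩
  set v1 : Fin n := ⟨1, h1⟩
  ext i j
  rw [Matrix.mul_apply]
  rcases Nat.lt_or_ge (i:ℕ) 2 with hi | hi
  · interval_cases h : (i:ℕ)
    · -- i = 0
      have : ∀ k, gpp n x i k * ginv n x k j = if k = v1 then ginv n x v1 j else 0 := by
        intro k
        by_cases hk : k = v1
        · subst hk; simp [gpp, h, v1]
        · have : (k:ℕ) ≠ 1 := fun hc => hk (Fin.ext (by simp [hc, v1]))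
          simp [gpp, h, this, hk]
      rw [Finset.sum_congr rfl (fun k _ => this k), Finset.sum_ite_eq']
      simp only [Finset.mem_univ, if_true]
      by_cases hj : (j:ℕ) = 0
      · have : i = j := Fin.ext (by simp [h, hj])
        simp [ginv, v1, hj, this, Matrix.one_apply]
      · have : i ≠ j := fun hc => hj (by rw [← hc, h])
        simp [ginv, v1, hj, this, Matrix.one_apply]
    · -- i = 1
      have : ∀ k, gpp n x i k * ginv n x k j =
          (if k = v0 then ginv n x v0 j else 0) + (if k = v1 then (co 2 x)^2 * ginv n x v1 j else 0) := by
        intro k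
        by_cases hk0 : k = v0
        · subst hk0; simp [gpp, h, v0, v1]
        · by_cases hk1 : k = v1
          · subst hk1; simp [gpp, h, v0, v1]
          · have e0 : (k:ℕ) ≠ 0 := fun hc => hk0 (Fin.ext (by simp [hc, v0]))
            have e1 : (k:ℕ) ≠ 1 := fun hc => hk1 (Fin.ext (by simp [hc, v1]))
            simp [gpp, h, e0, e1, hk0, hk1]
      rw [Finset.sum_congr rfl (fun k _ => this k), Finset.sum_add_distrib,
        Finset.sum_ite_eq', Finset.sum_ite_eq']
      simp only [Finset.mem_univ, if_true]
      have hij : (i = j) ↔ ((j:ℕ) = 1) := by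
        constructor
        · intro hc; rw [← hc, h]
        · intro hc; exact Fin.ext (by rw [h, hc] : (i:ℕ) = (j:ℕ))
      by_cases hj : (j:ℕ) = 1
      · simp [ginv, v0, v1, hj, Matrix.one_apply, hij.mpr hj]
      · by_cases hj0 : (j:ℕ) = 0
        · have : i ≠ j := fun hc => hj (hij.mp hc)
          simp [ginv, v0, v1, hj, hj0, Matrix.one_apply, this]
          try ring
        · have : i ≠ j := fun hc => hj (hij.mp hc)
          simp [ginv, v0, v1, hj, hj0, Matrix.one_apply, this]
  · -- 2 ≤ i
    have : ∀ k, gpp n x i k * ginv n x k j = if k = i then ginv n x i j else 0 := by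
      intro k
      have e0 : (i:ℕ) ≠ 0 := by omega
      have e1 : (i:ℕ) ≠ 1 := by omega
      by_cases hk : k = i
      · subst hk; simp [gpp, e0, e1, hi]
      · have : ¬ (i = k) := fun hc => hk hc.symm
        simp [gpp, e0, e1, this, hk]
    rw [Finset.sum_congr rfl (fun k _ => this k), Finset.sum_ite_eq']
    simp only [Finset.mem_univ, if_true]
    have e0 : (i:ℕ) ≠ 0 := by omega
    have e1 : (i:ℕ) ≠ 1 := by omega
    by_cases hij : i = j
    · subst hij; simp [ginv, e0, e1, hi, Matrix.one_apply]
    · simp [ginv, hij, e0, e1, Matrix.one_apply]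
      try (intro h1 h2; exact absurd (Fin.ext (h1.trans h2.symm) : i = j) hij)

lemma gpp_inv (hn : 3 ≤ n) (x : Fin n → ℝ) : (gpp n x)⁻¹ = ginv n x :=
  Matrix.inv_eq_right_inv (gpp_mul_ginv hn x)

def coef {n : ℕ} (k i j : Fin n) : ℝ :=
  if (k:ℕ) = 2 ∧ (i:ℕ) = 1 ∧ (j:ℕ) = 1 then -1
  else if (k:ℕ) = 0 ∧ (((i:ℕ) = 1 ∧ (j:ℕ) = 2) ∨ ((i:ℕ) = 2 ∧ (j:ℕ) = 1)) then 1
  else 0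

lemma co_eq (hn : 3 ≤ n) (x : Fin n → ℝ) : co 2 x = x ⟨2, by omega⟩ := by
  rw [co, dif_pos]

lemma pd_gpp (hn : 3 ≤ n) (l i j : Fin n) (x : Fin n → ℝ) :
    pd l (fun y => gpp n y i j) x =
      if (i:ℕ) = 1 ∧ (j:ℕ) = 1 ∧ (l:ℕ) = 2 then 2 * co 2 x else 0 := by
  have h2 : (2:ℕ) < n := by omega
  by_cases hA : ((i : ℕ) = 0 ∧ (j : ℕ) = 1) ∨ ((i : ℕ) = 1 ∧ (j : ℕ) = 0)
  · have : (fun y => gpp n y i j) = fun _ => (1:ℝ) := by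
      funext y; simp [gpp, hA]
    rw [this, pd_const]
    have : ¬ ((i:ℕ) = 1 ∧ (j:ℕ) = 1 ∧ (l:ℕ) = 2) := by omega
    simp [this]
  · by_cases hB : (i:ℕ) = 1 ∧ (j:ℕ) = 1
    · have : (fun y => gpp n y i j) = fun y => (y ⟨2, h2⟩)^2 := by
        funext y; simp [gpp, hA, hB, co, h2]
      rw [this, pd_sq]
      have hv : (⟨2, h2⟩ : Fin n) = l ↔ (l:ℕ) = 2 := by
        constructor
        · intro hc; rw [← hc]
        · intro hc; exact Fin.ext (by simp [hc])
      by_cases hl : (l:ℕ) = 2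
      · simp [hB, hl, hv.mpr hl, co, h2]
      · have : ¬ ((⟨2, h2⟩ : Fin n) = l) := fun hc => hl (hv.mp hc)
        simp [hB, hl, this]
    · have : (fun y => gpp n y i j) = fun _ => (if i = j ∧ 2 ≤ (i:ℕ) then (1:ℝ) else 0) := by
        funext y; simp [gpp, hA, hB]
      rw [this, pd_const]
      have : ¬ ((i:ℕ) = 1 ∧ (j:ℕ) = 1 ∧ (l:ℕ) = 2) := by simp at hB ⊢; omega
      simp [this]

lemma christoffel_gpp (hn : 3 ≤ n) (k i j : Fin n) :
    christoffel (gpp n) k i j = fun x => coef k i j * co 2 x := by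
  funext x
  have h1 : (1:ℕ) < n := by omega
  have h2 : (2:ℕ) < n := by omega
  set v1 : Fin n := ⟨1, h1⟩
  set v2 : Fin n := ⟨2, h2⟩
  rw [christoffel, gpp_inv hn]
  have key : ∀ l : Fin n, ginv n x k l *
      (pd i (fun y => gpp n y j l) x + pd j (fun y => gpp n y i l) x - pd l (fun y => gpp n y i j) x)
      = (if l = v1 then ginv n x k v1 * ((if ((j:ℕ)=1 ∧ (i:ℕ)=2) ∨ ((i:ℕ)=1 ∧ (j:ℕ)=2) then 2 * co 2 x else 0)) else 0)
        + (if l = v2 then ginv n x k v2 * (- (if (i:ℕ)=1 ∧ (j:ℕ)=1 then 2 * co 2 x else 0)) else 0) := by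
    intro l
    rw [pd_gpp hn, pd_gpp hn, pd_gpp hn]
    by_cases hl1 : l = v1
    · subst hl1
      have : ¬ ((i:ℕ)=1 ∧ (j:ℕ)=1 ∧ ((v1:Fin n):ℕ) = 2) := by simp [v1]
      have hne : (v1 : Fin n) ≠ v2 := by simp [v1, v2, Fin.ext_iff]
      simp only [this, if_false, if_pos rfl, if_neg hne, v1, v2]
      by_cases hc1 : (j:ℕ)=1 ∧ (i:ℕ)=2 <;> by_cases hc2 : (i:ℕ)=1 ∧ (j:ℕ)=2 <;>
        simp [hc1, hc2] <;> ring
    · by_cases hl2 : l = v2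
      · subst hl2
        have e1 : ¬ ((j:ℕ)=1 ∧ ((v2:Fin n):ℕ)=1 ∧ (i:ℕ)=2) := by simp [v2]
        have e2 : ¬ ((i:ℕ)=1 ∧ ((v2:Fin n):ℕ)=1 ∧ (j:ℕ)=2) := by simp [v2]
        simp only [e1, e2, if_false, if_pos rfl, if_neg hl1]
        by_cases hc : (i:ℕ)=1 ∧ (j:ℕ)=1 <;> simp [hc, v2] <;> ring
      · have e1 : (l:ℕ) ≠ 1 := fun hc => hl1 (Fin.ext (by simp [hc, v1]))
        have e2 : (l:ℕ) ≠ 2 := fun hc => hl2 (Fin.ext (by simp [hc, v2]))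
        simp [hl1, hl2, e1, e2]
  rw [Finset.sum_congr rfl (fun l _ => key l), Finset.sum_add_distrib,
    Finset.sum_ite_eq', Finset.sum_ite_eq']
  simp only [Finset.mem_univ, if_true]
  have g1 : ginv n x k v1 = if (k:ℕ) = 0 then 1 else 0 := by
    by_cases hk : (k:ℕ) = 0 <;> simp [ginv, v1, hk, Fin.ext_iff] <;> omega
  have g2 : ginv n x k v2 = if (k:ℕ) = 2 then 1 else 0 := by
    by_cases hk : (k:ℕ) = 2 <;> simp [ginv, v2, hk, Fin.ext_iff] <;> omega
  rw [g1, g2]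
  unfold coef
  by_cases hk0 : (k:ℕ) = 0 <;> by_cases hk2 : (k:ℕ) = 2 <;>
    by_cases hi1 : (i:ℕ) = 1 <;> by_cases hj1 : (j:ℕ) = 1 <;>
    by_cases hi2 : (i:ℕ) = 2 <;> by_cases hj2 : (j:ℕ) = 2 <;>
    simp [hk0, hk2, hi1, hj1, hi2, hj2] <;> ring

lemma pd_cmul_coord {n : ℕ} (i j : Fin n) (c : ℝ) (x : Fin n → ℝ) :
    pd i (fun y => c * y j) x = c * (if j = i then 1 else 0) := by
  have : (fun y : Fin n → ℝ => c * y j) = ⇑(c • ContinuousLinearMap.proj (R := ℝ) (φ := fun _ : Fin n => ℝ) j) := rfl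
  rw [this, pd_clm]
  simp [Pi.single_apply]

lemma coef_eq_zero {k i j : Fin n}
    (h1 : ¬((k:ℕ)=2 ∧ (i:ℕ)=1 ∧ (j:ℕ)=1))
    (h2 : ¬((k:ℕ)=0 ∧ (((i:ℕ)=1 ∧ (j:ℕ)=2) ∨ ((i:ℕ)=2 ∧ (j:ℕ)=1)))) : coef k i j = 0 := by
  simp only [coef, if_neg h1, if_neg h2]

lemma chr_val (hn : 3 ≤ n) (k i j : Fin n) (x : Fin n → ℝ) :
    christoffel (gpp n) k i j x = coef k i j * co 2 x := by
  rw [christoffel_gpp hn]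

lemma pd_chr (hn : 3 ≤ n) (s k i j : Fin n) (x : Fin n → ℝ) :
    pd s (christoffel (gpp n) k i j) x = if (s:ℕ) = 2 then coef k i j else 0 := by
  have h2 : (2:ℕ) < n := by omega
  rw [christoffel_gpp hn]
  have : (fun x : Fin n → ℝ => coef k i j * co 2 x) = fun x => coef k i j * x ⟨2, h2⟩ := by
    funext y; rw [co_eq hn]
  rw [this, pd_cmul_coord]
  have hv : (⟨2, h2⟩ : Fin n) = s ↔ (s:ℕ) = 2 := by
    constructor
    · intro hc; rw [← hc]
    · intro hc; exact Fin.ext (by simp [hc])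
  by_cases hs : (s:ℕ) = 2
  · simp [hs, hv.mpr hs]
  · have : ¬ ((⟨2, h2⟩ : Fin n) = s) := fun hc => hs (hv.mp hc)
    simp [hs, this]

lemma lc1 (hn : 3 ≤ n) (k i j : Fin n) (x : Fin n → ℝ) :
    lieConn (fun k x => if (k : ℕ) = 0 then co 1 x else 0)
      (christoffel (gpp n)) k i j x = 0 := by
  have h1 : (1:ℕ) < n := by omega
  set v : Fin n → (Fin n → ℝ) → ℝ := fun k x => if (k : ℕ) = 0 then co 1 x else 0 with hv
  have pdv : ∀ (m k' : Fin n) (y : Fin n → ℝ),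
      pd m (v k') y = if (k':ℕ) = 0 ∧ (m:ℕ) = 1 then 1 else 0 := by
    intro m k' y
    by_cases hk : (k':ℕ) = 0
    · have : v k' = fun x => x ⟨1, h1⟩ := by
        funext z; simp [hv, hk, co, h1]
      rw [this, pd_coord]
      have hvm : (⟨1, h1⟩ : Fin n) = m ↔ (m:ℕ) = 1 := by
        constructor
        · intro hc; rw [← hc]
        · intro hc; exact Fin.ext (by simp [hc])
      by_cases hm : (m:ℕ) = 1
      · simp [hk, hm, hvm.mpr hm]
      · have hne : ¬ (⟨1, h1⟩ : Fin n) = m := fun hc => hm (hvm.mp hc)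
        simp [hk, hm, hne]
    · have : v k' = fun _ => (0:ℝ) := by funext z; simp [hv, hk]
      rw [this, pd_const]
      simp [hk]
  rw [lieConn]
  have hfirst : (fun y => pd j (v k) y) = fun _ => (if (k:ℕ) = 0 ∧ (j:ℕ) = 1 then (1:ℝ) else 0) := by
    funext y; rw [pdv]
  rw [hfirst, pd_const, zero_add]
  apply Finset.sum_eq_zero
  intro s _
  have t1 : v s x * pd s (christoffel (gpp n) k i j) x = 0 := by
    by_cases hs : (s:ℕ) = 0
    · rw [pd_chr hn]; simp [hs]
    · simp [hv, hs]
  have t2 : christoffel (gpp n) k s j x * pd i (v s) x = 0 := by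
    by_cases hc : (s:ℕ) = 0 ∧ (i:ℕ) = 1
    · rw [chr_val hn, coef_eq_zero (by omega) (by omega)]; ring
    · rw [pdv, if_neg (by tauto)]; ring
  have t3 : christoffel (gpp n) k i s x * pd j (v s) x = 0 := by
    by_cases hc : (s:ℕ) = 0 ∧ (j:ℕ) = 1
    · rw [chr_val hn, coef_eq_zero (by omega) (by omega)]; ring
    · rw [pdv, if_neg (by tauto)]; ring
  have t4 : christoffel (gpp n) s i j x * pd s (v k) x = 0 := by
    by_cases hc : (k:ℕ) = 0 ∧ (s:ℕ) = 1
    · rw [chr_val hn, coef_eq_zero (by omega) (by omega)]; ring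
    · rw [pdv, if_neg (by tauto)]; ring
  rw [t1, t2, t3, t4]; ring

lemma lc2 (hn : 3 ≤ n) (i₀ : Fin n) (hi₀ : 3 ≤ (i₀:ℕ)) (k i j : Fin n) (x : Fin n → ℝ) :
    lieConn (fun k x => if (k : ℕ) = 0 then x i₀ else 0)
      (christoffel (gpp n)) k i j x = 0 := by
  set v : Fin n → (Fin n → ℝ) → ℝ := fun k x => if (k : ℕ) = 0 then x i₀ else 0 with hv
  have pdv : ∀ (m k' : Fin n) (y : Fin n → ℝ),
      pd m (v k') y = if (k':ℕ) = 0 ∧ i₀ = m then 1 else 0 := by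
    intro m k' y
    by_cases hk : (k':ℕ) = 0
    · have : v k' = fun x => x i₀ := by funext z; simp [hv, hk]
      rw [this, pd_coord]
      by_cases hm : i₀ = m <;> simp [hk, hm]
    · have : v k' = fun _ => (0:ℝ) := by funext z; simp [hv, hk]
      rw [this, pd_const]; simp [hk]
  rw [lieConn]
  have hfirst : (fun y => pd j (v k) y) = fun _ => (if (k:ℕ) = 0 ∧ i₀ = j then (1:ℝ) else 0) := by
    funext y; rw [pdv]
  rw [hfirst, pd_const, zero_add]
  apply Finset.sum_eq_zero
  intro s _
  have t1 : v s x * pd s (christoffel (gpp n) k i j) x = 0 := by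
    by_cases hs : (s:ℕ) = 0
    · rw [pd_chr hn]; simp [hs]
    · simp [hv, hs]
  have t2 : christoffel (gpp n) k s j x * pd i (v s) x = 0 := by
    by_cases hc : (s:ℕ) = 0 ∧ i₀ = i
    · rw [chr_val hn, coef_eq_zero (by omega) (by omega)]; ring
    · rw [pdv, if_neg (by tauto)]; ring
  have t3 : christoffel (gpp n) k i s x * pd j (v s) x = 0 := by
    by_cases hc : (s:ℕ) = 0 ∧ i₀ = j
    · rw [chr_val hn, coef_eq_zero (by omega) (by omega)]; ring
    · rw [pdv, if_neg (by tauto)]; ring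
  have t4 : christoffel (gpp n) s i j x * pd s (v k) x = 0 := by
    by_cases hc : (k:ℕ) = 0 ∧ i₀ = s
    · have hs3 : 3 ≤ (s:ℕ) := by rw [← hc.2]; exact hi₀
      rw [chr_val hn, coef_eq_zero (by omega) (by omega)]; ring
    · rw [pdv, if_neg (by tauto)]; ring
  rw [t1, t2, t3, t4]; ring

lemma lc3 (hn : 3 ≤ n) (i₀ j₀ : Fin n) (hi₀ : 3 ≤ (i₀:ℕ)) (hj₀ : 3 ≤ (j₀:ℕ))
    (k i j : Fin n) (x : Fin n → ℝ) :
    lieConn (fun k x => (if k = j₀ then x i₀ else 0) + (if k = i₀ then x j₀ else 0))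
      (christoffel (gpp n)) k i j x = 0 := by
  set v : Fin n → (Fin n → ℝ) → ℝ :=
    fun k x => (if k = j₀ then x i₀ else 0) + (if k = i₀ then x j₀ else 0) with hv
  have pdv : ∀ (m k' : Fin n) (y : Fin n → ℝ),
      pd m (v k') y = (if k' = j₀ ∧ i₀ = m then 1 else 0) + (if k' = i₀ ∧ j₀ = m then 1 else 0) := by
    intro m k' y
    by_cases ha : k' = j₀ <;> by_cases hb : k' = i₀
    · have hij : i₀ = j₀ := hb.symm.trans ha
      have hf : v k' = fun x => x i₀ + x j₀ := by
        funext z; show (if k' = j₀ then z i₀ else 0) + (if k' = i₀ then z j₀ else 0) = _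
        rw [if_pos ha, if_pos hb]
      rw [hf, pd_coord_add]
      by_cases h1 : i₀ = m
      · rw [if_pos h1, if_pos (hij.symm.trans h1), if_pos ⟨ha, h1⟩,
          if_pos ⟨hb, hij.symm.trans h1⟩]
      · have h2 : ¬ j₀ = m := fun hc => h1 (hij.trans hc)
        rw [if_neg h1, if_neg h2, if_neg (fun hc : k' = j₀ ∧ i₀ = m => h1 hc.2),
          if_neg (fun hc : k' = i₀ ∧ j₀ = m => h2 hc.2)]
    · have hf : v k' = fun x => x i₀ := by
        funext z; show (if k' = j₀ then z i₀ else 0) + (if k' = i₀ then z j₀ else 0) = _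
        rw [if_pos ha, if_neg hb, add_zero]
      rw [hf, pd_coord]
      rw [if_neg (fun hc : k' = i₀ ∧ j₀ = m => hb hc.1)]
      by_cases h1 : i₀ = m
      · rw [if_pos h1, if_pos ⟨ha, h1⟩, add_zero]
      · rw [if_neg h1, if_neg (fun hc : k' = j₀ ∧ i₀ = m => h1 hc.2), add_zero]
    · have hf : v k' = fun x => x j₀ := by
        funext z; show (if k' = j₀ then z i₀ else 0) + (if k' = i₀ then z j₀ else 0) = _
        rw [if_pos hb, if_neg ha, zero_add]
      rw [hf, pd_coord]
      rw [if_neg (fun hc : k' = j₀ ∧ i₀ = m => ha hc.1)]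
      by_cases h2 : j₀ = m
      · rw [if_pos h2, if_pos ⟨hb, h2⟩, zero_add]
      · rw [if_neg h2, if_neg (fun hc : k' = i₀ ∧ j₀ = m => h2 hc.2), zero_add]
    · have hf : v k' = fun _ => (0:ℝ) := by
        funext z; show (if k' = j₀ then z i₀ else 0) + (if k' = i₀ then z j₀ else 0) = _
        rw [if_neg ha, if_neg hb, add_zero]
      rw [hf, pd_const, if_neg (fun hc : k' = j₀ ∧ i₀ = m => ha hc.1),
        if_neg (fun hc : k' = i₀ ∧ j₀ = m => hb hc.1), add_zero]
  rw [lieConn]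
  have hfirst : (fun y => pd j (v k) y)
      = fun _ => ((if k = j₀ ∧ i₀ = j then (1:ℝ) else 0) + (if k = i₀ ∧ j₀ = j then 1 else 0)) := by
    funext y; rw [pdv]
  rw [hfirst, pd_const, zero_add]
  apply Finset.sum_eq_zero
  intro s _
  have chr_lo : ∀ (a b : Fin n), 3 ≤ (s:ℕ) → christoffel (gpp n) a s b x = 0 := by
    intro a b hs; rw [chr_val hn, coef_eq_zero (by omega) (by omega)]; ring
  have chr_hi : ∀ (a b : Fin n), 3 ≤ (s:ℕ) → christoffel (gpp n) a b s x = 0 := by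
    intro a b hs; rw [chr_val hn, coef_eq_zero (by omega) (by omega)]; ring
  have chr_up : ∀ (a b : Fin n), 3 ≤ (s:ℕ) → christoffel (gpp n) s a b x = 0 := by
    intro a b hs; rw [chr_val hn, coef_eq_zero (by omega) (by omega)]; ring
  have vsup : (v s x ≠ 0 ∨ (∃ m y, pd m (v s) y ≠ 0)) → 3 ≤ (s:ℕ) := by
    intro h
    by_contra hs
    have hs1 : s ≠ j₀ := fun hc => hs (by rw [hc]; exact hj₀)
    have hs2 : s ≠ i₀ := fun hc => hs (by rw [hc]; exact hi₀)
    rcases h with h | ⟨m, y, h⟩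
    · exact h (by simp [hv, hs1, hs2])
    · exact h (by rw [pdv]; simp [hs1, hs2])
  have t1 : v s x * pd s (christoffel (gpp n) k i j) x = 0 := by
    by_cases hvs : v s x = 0
    · rw [hvs]; ring
    · have hs := vsup (Or.inl hvs)
      rw [pd_chr hn, if_neg (by omega)]; ring
  have t2 : christoffel (gpp n) k s j x * pd i (v s) x = 0 := by
    by_cases hp : pd i (v s) x = 0
    · rw [hp]; ring
    · rw [chr_lo _ _ (vsup (Or.inr ⟨i, x, hp⟩))]; ring
  have t3 : christoffel (gpp n) k i s x * pd j (v s) x = 0 := by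
    by_cases hp : pd j (v s) x = 0
    · rw [hp]; ring
    · rw [chr_hi _ _ (vsup (Or.inr ⟨j, x, hp⟩))]; ring
  have t4 : christoffel (gpp n) s i j x * pd s (v k) x = 0 := by
    by_cases hp : pd s (v k) x = 0
    · rw [hp]; ring
    · have : 3 ≤ (s:ℕ) := by
        rw [pdv] at hp
        by_cases h1 : k = j₀ ∧ i₀ = s
        · rw [← h1.2]; exact hi₀
        · by_cases h2 : k = i₀ ∧ j₀ = s
          · rw [← h2.2]; exact hj₀
          · exact absurd (by simp [h1, h2]) hp
      rw [chr_up _ _ this]; ring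
  rw [t1, t2, t3, t4]; ring

lemma pdv_a (hn : 3 ≤ n) (k' m : Fin n) (y : Fin n → ℝ) :
    pd m (fun x : Fin n → ℝ => if (k':ℕ) = 0 then co 1 x else 0) y
      = if (k':ℕ) = 0 ∧ (m:ℕ) = 1 then 1 else 0 := by
  have h1 : (1:ℕ) < n := by omega
  by_cases hk : (k':ℕ) = 0
  · have : (fun x : Fin n → ℝ => if (k':ℕ) = 0 then co 1 x else 0) = fun x => x ⟨1, h1⟩ := by
      funext z; simp [hk, co, h1]
    rw [this, pd_coord]
    have hvm : (⟨1, h1⟩ : Fin n) = m ↔ (m:ℕ) = 1 := by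
      constructor
      · intro hc; rw [← hc]
      · intro hc; exact Fin.ext (by simp [hc])
    by_cases hm : (m:ℕ) = 1
    · simp [hk, hm, hvm.mpr hm]
    · have hne : ¬ (⟨1, h1⟩ : Fin n) = m := fun hc => hm (hvm.mp hc)
      simp [hk, hm, hne]
  · have : (fun x : Fin n → ℝ => if (k':ℕ) = 0 then co 1 x else 0) = fun _ => (0:ℝ) := by
      funext z; simp [hk]
    rw [this, pd_const]; simp [hk]

lemma pdv_b (i₀ k' m : Fin n) (y : Fin n → ℝ) :
    pd m (fun x : Fin n → ℝ => if (k':ℕ) = 0 then x i₀ else 0) y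
      = if (k':ℕ) = 0 ∧ i₀ = m then 1 else 0 := by
  by_cases hk : (k':ℕ) = 0
  · have : (fun x : Fin n → ℝ => if (k':ℕ) = 0 then x i₀ else 0) = fun x => x i₀ := by
      funext z; simp [hk]
    rw [this, pd_coord]
    by_cases hm : i₀ = m <;> simp [hk, hm]
  · have : (fun x : Fin n → ℝ => if (k':ℕ) = 0 then x i₀ else 0) = fun _ => (0:ℝ) := by
      funext z; simp [hk]
    rw [this, pd_const]; simp [hk]

lemma pdv_c (i₀ j₀ k' m : Fin n) (y : Fin n → ℝ) :
    pd m (fun x : Fin n → ℝ => (if k' = j₀ then x i₀ else 0) + (if k' = i₀ then x j₀ else 0)) y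
      = (if k' = j₀ ∧ i₀ = m then 1 else 0) + (if k' = i₀ ∧ j₀ = m then 1 else 0) := by
  by_cases ha : k' = j₀ <;> by_cases hb : k' = i₀
  · have hij : i₀ = j₀ := hb.symm.trans ha
    have hf : (fun x : Fin n → ℝ => (if k' = j₀ then x i₀ else 0) + (if k' = i₀ then x j₀ else 0))
        = fun x => x i₀ + x j₀ := by
      funext z; rw [if_pos ha, if_pos hb]
    rw [hf, pd_coord_add]
    by_cases h1 : i₀ = m
    · rw [if_pos h1, if_pos (hij.symm.trans h1), if_pos ⟨ha, h1⟩,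
        if_pos ⟨hb, hij.symm.trans h1⟩]
    · have h2 : ¬ j₀ = m := fun hc => h1 (hij.trans hc)
      rw [if_neg h1, if_neg h2, if_neg (fun hc : k' = j₀ ∧ i₀ = m => h1 hc.2),
        if_neg (fun hc : k' = i₀ ∧ j₀ = m => h2 hc.2)]
  · have hf : (fun x : Fin n → ℝ => (if k' = j₀ then x i₀ else 0) + (if k' = i₀ then x j₀ else 0))
        = fun x => x i₀ := by
      funext z; rw [if_pos ha, if_neg hb, add_zero]
    rw [hf, pd_coord]
    rw [if_neg (fun hc : k' = i₀ ∧ j₀ = m => hb hc.1)]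
    by_cases h1 : i₀ = m
    · rw [if_pos h1, if_pos ⟨ha, h1⟩, add_zero]
    · rw [if_neg h1, if_neg (fun hc : k' = j₀ ∧ i₀ = m => h1 hc.2), add_zero]
  · have hf : (fun x : Fin n → ℝ => (if k' = j₀ then x i₀ else 0) + (if k' = i₀ then x j₀ else 0))
        = fun x => x j₀ := by
      funext z; rw [if_pos hb, if_neg ha, zero_add]
    rw [hf, pd_coord]
    rw [if_neg (fun hc : k' = j₀ ∧ i₀ = m => ha hc.1)]
    by_cases h2 : j₀ = m
    · rw [if_pos h2, if_pos ⟨hb, h2⟩, zero_add]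
    · rw [if_neg h2, if_neg (fun hc : k' = i₀ ∧ j₀ = m => h2 hc.2), zero_add]
  · have hf : (fun x : Fin n → ℝ => (if k' = j₀ then x i₀ else 0) + (if k' = i₀ then x j₀ else 0))
        = fun _ => (0:ℝ) := by
      funext z; rw [if_neg ha, if_neg hb, add_zero]
    rw [hf, pd_const, if_neg (fun hc : k' = j₀ ∧ i₀ = m => ha hc.1),
      if_neg (fun hc : k' = i₀ ∧ j₀ = m => hb hc.1), add_zero]

-- values of gpp at a general point, via nat coercion conditions, at 0

lemma gpp_zero (hn : 3 ≤ n) (i j : Fin n) :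
    gpp n (0 : Fin n → ℝ) i j =
      if ((i : ℕ) = 0 ∧ (j : ℕ) = 1) ∨ ((i : ℕ) = 1 ∧ (j : ℕ) = 0) then 1
      else if i = j ∧ 2 ≤ (i : ℕ) then 1 else 0 := by
  have h2 : (2:ℕ) < n := by omega
  by_cases hA : ((i : ℕ) = 0 ∧ (j : ℕ) = 1) ∨ ((i : ℕ) = 1 ∧ (j : ℕ) = 0)
  · simp [gpp, hA]
  · by_cases hB : (i:ℕ) = 1 ∧ (j:ℕ) = 1
    · have : ¬ (i = j ∧ 2 ≤ (i:ℕ)) := by rintro ⟨_, h⟩; omega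
      simp [gpp, hA, hB, this, co, h2]
    · simp [gpp, hA, hB]

-- case 1: lieMetric at (1,1), x = 0 equals 2

lemma lm1 (hn : 3 ≤ n) :
    ¬ ∃ c : ℝ, ∀ (i j : Fin n) (x : Fin n → ℝ),
      lieMetric (fun k x => if (k : ℕ) = 0 then co 1 x else 0) (gpp n) i j x
        = c * gpp n x i j := by
  rintro ⟨c, h⟩
  have h0 : (0:ℕ) < n := by omega
  have h1 : (1:ℕ) < n := by omega
  set v0 : Fin n := ⟨0, h0⟩
  set v1 : Fin n := ⟨1, h1⟩
  have key := h v1 v1 0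
  rw [lieMetric] at key
  have hterm : ∀ k : Fin n,
      ((fun k x => if (k : ℕ) = 0 then co 1 x else 0) k (0 : Fin n → ℝ)
          * pd k (fun y => gpp n y v1 v1) (0 : Fin n → ℝ)
        + gpp n 0 k v1 * pd v1 ((fun k x => if (k : ℕ) = 0 then co 1 x else 0) k) (0 : Fin n → ℝ)
        + gpp n 0 v1 k * pd v1 ((fun k x => if (k : ℕ) = 0 then co 1 x else 0) k) (0 : Fin n → ℝ))
      = if k = v0 then 2 else 0 := by
    intro k
    rw [pd_gpp hn, pdv_a hn, gpp_zero hn, gpp_zero hn]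
    by_cases hk : k = v0
    · subst hk; simp [v0, v1, co]; norm_num
    · have : (k:ℕ) ≠ 0 := fun hc => hk (Fin.ext (by simp [hc, v0]))
      simp [v0, v1, this, hk, co]
  rw [Finset.sum_congr rfl (fun k _ => hterm k), Finset.sum_ite_eq'] at key
  simp only [Finset.mem_univ, if_true] at key
  rw [gpp_zero hn] at key
  simp [v1] at key

lemma lm2 (hn : 3 ≤ n) (i₀ : Fin n) (hi₀ : 3 ≤ (i₀:ℕ)) :
    ¬ ∃ c : ℝ, ∀ (i j : Fin n) (x : Fin n → ℝ),
      lieMetric (fun k x => if (k : ℕ) = 0 then x i₀ else 0) (gpp n) i j x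
        = c * gpp n x i j := by
  rintro ⟨c, h⟩
  have h0 : (0:ℕ) < n := by omega
  have h1 : (1:ℕ) < n := by omega
  set v0 : Fin n := ⟨0, h0⟩
  set v1 : Fin n := ⟨1, h1⟩
  have key := h i₀ v1 0
  rw [lieMetric] at key
  have hterm : ∀ k : Fin n,
      ((fun k x => if (k : ℕ) = 0 then x i₀ else 0) k (0 : Fin n → ℝ)
          * pd k (fun y => gpp n y i₀ v1) (0 : Fin n → ℝ)
        + gpp n 0 k v1 * pd i₀ ((fun k x => if (k : ℕ) = 0 then x i₀ else 0) k) (0 : Fin n → ℝ)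
        + gpp n 0 i₀ k * pd v1 ((fun k x => if (k : ℕ) = 0 then x i₀ else 0) k) (0 : Fin n → ℝ))
      = if k = v0 then 1 else 0 := by
    intro k
    rw [pd_gpp hn, pdv_b, pdv_b, gpp_zero hn, gpp_zero hn]
    have hne : ¬ i₀ = v1 := fun hc => by
      have : (i₀:ℕ) = 1 := by rw [hc]
      omega
    by_cases hk : k = v0
    · subst hk
      have e1 : ¬ ((i₀:ℕ) = 1) := by omega
      simp [v0, v1, e1, hne]
    · have : (k:ℕ) ≠ 0 := fun hc => hk (Fin.ext (by simp [hc, v0]))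
      simp [v0, v1, this, hk, hne]
  rw [Finset.sum_congr rfl (fun k _ => hterm k), Finset.sum_ite_eq'] at key
  simp only [Finset.mem_univ, if_true] at key
  rw [gpp_zero hn] at key
  have e1 : ¬ ((i₀:ℕ) = 0) := by omega
  have e2 : ¬ ((i₀:ℕ) = 1) := by omega
  have e3 : ¬ (i₀ = v1) := fun hc => by
    have : (i₀:ℕ) = 1 := by rw [hc]
    omega
  simp [v1, e1, e2, e3] at key

lemma lm3 (hn : 3 ≤ n) (i₀ j₀ : Fin n) (hi₀ : 3 ≤ (i₀:ℕ)) (hj₀ : 3 ≤ (j₀:ℕ)) :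
    ¬ ∃ c : ℝ, ∀ (i j : Fin n) (x : Fin n → ℝ),
      lieMetric (fun k x => (if k = j₀ then x i₀ else 0) + (if k = i₀ then x j₀ else 0))
        (gpp n) i j x = c * gpp n x i j := by
  rintro ⟨c, h⟩
  have h0 : (0:ℕ) < n := by omega
  have h1 : (1:ℕ) < n := by omega
  set v0 : Fin n := ⟨0, h0⟩
  set v1 : Fin n := ⟨1, h1⟩
  set v : Fin n → (Fin n → ℝ) → ℝ :=
    fun k x => (if k = j₀ then x i₀ else 0) + (if k = i₀ then x j₀ else 0) with hv
  have hi0 : ¬ i₀ = v0 := fun hc => by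
    have : (i₀:ℕ) = 0 := by rw [hc]
    omega
  have hj0 : ¬ j₀ = v0 := fun hc => by
    have : (j₀:ℕ) = 0 := by rw [hc]
    omega
  have hi1 : ¬ i₀ = v1 := fun hc => by
    have : (i₀:ℕ) = 1 := by rw [hc]
    omega
  have hj1 : ¬ j₀ = v1 := fun hc => by
    have : (j₀:ℕ) = 1 := by rw [hc]
    omega
  -- first evaluation: (0,1) at 0 gives c = 0
  have hc0 : c = 0 := by
    have key := h v0 v1 0
    rw [lieMetric] at key
    have hterm : ∀ k : Fin n,
        (v k (0 : Fin n → ℝ) * pd k (fun y => gpp n y v0 v1) (0 : Fin n → ℝ)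
          + gpp n 0 k v1 * pd v0 (v k) (0 : Fin n → ℝ)
          + gpp n 0 v0 k * pd v1 (v k) (0 : Fin n → ℝ)) = 0 := by
      intro k
      rw [pd_gpp hn, pdv_c, pdv_c]
      have e1 : ¬ (k = j₀ ∧ i₀ = v0) := fun hc => hi0 hc.2
      have e2 : ¬ (k = i₀ ∧ j₀ = v0) := fun hc => hj0 hc.2
      have e3 : ¬ (k = j₀ ∧ i₀ = v1) := fun hc => hi1 hc.2
      have e4 : ¬ (k = i₀ ∧ j₀ = v1) := fun hc => hj1 hc.2
      have e5 : ¬ ((v0:Fin n):ℕ) = 1 := by simp [v0]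
      simp [e1, e2, e3, e4, e5, hv]
    rw [Finset.sum_congr rfl (fun k _ => hterm k), Finset.sum_const, smul_zero] at key
    rw [gpp_zero hn] at key
    simp [v0, v1] at key
    exact key.symm
  -- second evaluation: (i₀, j₀) at 0 gives 2 + 2[i₀=j₀] = 0
  have key := h i₀ j₀ 0
  rw [lieMetric, hc0, zero_mul] at key
  by_cases hij : i₀ = j₀
  · subst hij
    have hterm : ∀ k : Fin n,
        (v k (0 : Fin n → ℝ) * pd k (fun y => gpp n y i₀ i₀) (0 : Fin n → ℝ)
          + gpp n 0 k i₀ * pd i₀ (v k) (0 : Fin n → ℝ)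
          + gpp n 0 i₀ k * pd i₀ (v k) (0 : Fin n → ℝ)) = if k = i₀ then 4 else 0 := by
      intro k
      rw [pd_gpp hn, pdv_c, gpp_zero hn, gpp_zero hn]
      have e1 : ¬ ((i₀:ℕ) = 1 ∧ (i₀:ℕ) = 1 ∧ (k:ℕ) = 2) := by omega
      have n1 : ¬ (((k:ℕ) = 0 ∧ (i₀:ℕ) = 1) ∨ ((k:ℕ) = 1 ∧ (i₀:ℕ) = 0)) := by omega
      have n2 : ¬ (((i₀:ℕ) = 0 ∧ (k:ℕ) = 1) ∨ ((i₀:ℕ) = 1 ∧ (k:ℕ) = 0)) := by omega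
      rw [if_neg e1, if_neg n1, if_neg n2]
      by_cases hk : k = i₀
      · have p1 : k = i₀ ∧ 2 ≤ (k:ℕ) := ⟨hk, by rw [hk]; omega⟩
        have p2 : i₀ = k ∧ 2 ≤ (i₀:ℕ) := ⟨hk.symm, by omega⟩
        rw [if_pos p1, if_pos p2, if_pos (show k = i₀ ∧ i₀ = i₀ from ⟨hk, rfl⟩), if_pos hk]
        have : v k (0 : Fin n → ℝ) = 0 := by simp [hv]
        rw [this]; norm_num
      · have e2 : ¬ (k = i₀ ∧ i₀ = i₀) := fun hc => hk hc.1
        have e5 : ¬ (k = i₀ ∧ 2 ≤ (k:ℕ)) := fun hc => hk hc.1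
        have e6 : ¬ (i₀ = k ∧ 2 ≤ (i₀:ℕ)) := fun hc => hk hc.1.symm
        rw [if_neg e2, if_neg e5, if_neg e6, if_neg hk]
        ring
    rw [Finset.sum_congr rfl (fun k _ => hterm k), Finset.sum_ite_eq'] at key
    simp at key
  · have hterm : ∀ k : Fin n,
        (v k (0 : Fin n → ℝ) * pd k (fun y => gpp n y i₀ j₀) (0 : Fin n → ℝ)
          + gpp n 0 k j₀ * pd i₀ (v k) (0 : Fin n → ℝ)
          + gpp n 0 i₀ k * pd j₀ (v k) (0 : Fin n → ℝ))
        = (if k = j₀ then 1 else 0) + (if k = i₀ then 1 else 0) := by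
      intro k
      rw [pd_gpp hn, pdv_c, pdv_c, gpp_zero hn, gpp_zero hn]
      have e1 : ¬ ((i₀:ℕ) = 1 ∧ (j₀:ℕ) = 1 ∧ (k:ℕ) = 2) := by omega
      have e2 : ¬ (k = j₀ ∧ i₀ = j₀) := fun hc => hij hc.2
      have e3 : ¬ (k = i₀ ∧ j₀ = i₀) := fun hc => hij hc.2.symm
      have a1 : ¬ (((k:ℕ) = 0 ∧ (j₀:ℕ) = 1) ∨ ((k:ℕ) = 1 ∧ (j₀:ℕ) = 0)) := by omega
      have a2 : ¬ (((i₀:ℕ) = 0 ∧ (k:ℕ) = 1) ∨ ((i₀:ℕ) = 1 ∧ (k:ℕ) = 0)) := by omega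
      rw [if_neg e1, if_neg e2, if_neg e3, if_neg a1, if_neg a2]
      by_cases hk1 : k = j₀
      · have hk2 : ¬ k = i₀ := fun hc => hij (hc.symm.trans hk1)
        have b1 : k = j₀ ∧ 2 ≤ (k:ℕ) := ⟨hk1, by rw [hk1]; omega⟩
        have b2 : ¬ (i₀ = k ∧ 2 ≤ (i₀:ℕ)) := fun hc => hk2 hc.1.symm
        rw [if_pos b1, if_neg b2, if_pos (show k = j₀ ∧ i₀ = i₀ from ⟨hk1, rfl⟩),
          if_neg (fun hc : k = i₀ ∧ j₀ = j₀ => hk2 hc.1), if_pos hk1, if_neg hk2]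
        have : v k (0 : Fin n → ℝ) = 0 := by simp [hv]
        rw [this]; norm_num
      · by_cases hk2 : k = i₀
        · have b1 : ¬ (k = j₀ ∧ 2 ≤ (k:ℕ)) := fun hc => hk1 hc.1
          have b2 : i₀ = k ∧ 2 ≤ (i₀:ℕ) := ⟨hk2.symm, by omega⟩
          rw [if_neg b1, if_pos b2, if_neg (fun hc : k = j₀ ∧ i₀ = i₀ => hk1 hc.1),
            if_pos (show k = i₀ ∧ j₀ = j₀ from ⟨hk2, rfl⟩), if_neg hk1, if_pos hk2]
          have : v k (0 : Fin n → ℝ) = 0 := by simp [hv]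
          rw [this]; norm_num
        · have b1 : ¬ (k = j₀ ∧ 2 ≤ (k:ℕ)) := fun hc => hk1 hc.1
          have b2 : ¬ (i₀ = k ∧ 2 ≤ (i₀:ℕ)) := fun hc => hk2 hc.1.symm
          rw [if_neg b1, if_neg b2, if_neg (fun hc : k = j₀ ∧ i₀ = i₀ => hk1 hc.1),
            if_neg (fun hc : k = i₀ ∧ j₀ = j₀ => hk2 hc.1), if_neg hk1, if_neg hk2]
          ring
    rw [Finset.sum_congr rfl (fun k _ => hterm k), Finset.sum_add_distrib,
      Finset.sum_ite_eq', Finset.sum_ite_eq'] at key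
    simp at key


/-- the vector fields `y∂_x`, `u_i∂_x` and `u_i∂_{u_j} + u_j∂_{u_i}`
preserve the Levi-Civita connection of the pp-wave metric (they are affine
fields) but are not homothety fields. -/
theorem gpp_affine_fields {n : ℕ} (hn : 3 ≤ n) :
    ((∀ (k i j : Fin n) (x : Fin n → ℝ),
        lieConn (fun k x => if (k : ℕ) = 0 then co 1 x else 0)
          (christoffel (gpp n)) k i j x = 0) ∧
      ¬ ∃ c : ℝ, ∀ (i j : Fin n) (x : Fin n → ℝ),
        lieMetric (fun k x => if (k : ℕ) = 0 then co 1 x else 0) (gpp n) i j x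
          = c * gpp n x i j) ∧
    (∀ i₀ : Fin n, 3 ≤ (i₀ : ℕ) →
      (∀ (k i j : Fin n) (x : Fin n → ℝ),
        lieConn (fun k x => if (k : ℕ) = 0 then x i₀ else 0)
          (christoffel (gpp n)) k i j x = 0) ∧
      ¬ ∃ c : ℝ, ∀ (i j : Fin n) (x : Fin n → ℝ),
        lieMetric (fun k x => if (k : ℕ) = 0 then x i₀ else 0) (gpp n) i j x
          = c * gpp n x i j) ∧
    (∀ i₀ j₀ : Fin n, 3 ≤ (i₀ : ℕ) → (i₀ : ℕ) ≤ (j₀ : ℕ) →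
      (∀ (k i j : Fin n) (x : Fin n → ℝ),
        lieConn (fun k x => (if k = j₀ then x i₀ else 0) + (if k = i₀ then x j₀ else 0))
          (christoffel (gpp n)) k i j x = 0) ∧
      ¬ ∃ c : ℝ, ∀ (i j : Fin n) (x : Fin n → ℝ),
        lieMetric (fun k x => (if k = j₀ then x i₀ else 0) + (if k = i₀ then x j₀ else 0))
          (gpp n) i j x = c * gpp n x i j) := by
  refine ⟨⟨fun k i j x => lc1 hn k i j x, lm1 hn⟩,
    fun i₀ hi₀ => ⟨fun k i j x => lc2 hn i₀ hi₀ k i j x, lm2 hn i₀ hi₀⟩,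
    fun i₀ j₀ hi₀ hle => ⟨fun k i j x => lc3 hn i₀ j₀ hi₀ (hi₀.trans hle) k i j x,
      lm3 hn i₀ j₀ hi₀ (hi₀.trans hle)⟩⟩
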